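/- arXiv:math/9812001 — 3 statements merged into one kernel-verified Lean document; each statement's English description precedes it below -/
import Mathlib

section
/- Define operators on the free ℚ[q]-module with basis {S_{m,n} : m ≥ n ≥ 0} (formal symbols indexed by two-part partitions, with S_m := S_{m,0}) as follows: using the multiplication rule S_a · S_b = ∑_{ℓ=0}^{b} S_{a+b−ℓ, ℓ} for a ≥ b ≥ 0 (the Pieri rule), set B₂⁽⁰⁾ S_{m,n} = −q^{m+1}(1−q^{n+1}) S_{m+1}·S_{n+1} + q^n(1−q^{m+2}) S_{m+2}·S_n and B₂⁽¹⁾ S_{m,n} = q^{m+n+1}[(1−q^{n+1}) S_{m+1}·S_{n+1} − (1−q^{m+2}) S_{m+2}·S_n], where each product S_a·S_b is expanded by the Pieri rule into the basis {S_{m,n}}. Then for all m ≥ n ≥ 0: B₂⁽¹⁾(B₂⁽⁰⁾ S_{m,n}) = q · B₂⁽⁰⁾(B₂⁽¹⁾ S_{m,n}). -/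
/- The field ℚ(q) of rational functions. -/
noncomputable abbrev K : Type := RatFunc ℚ
noncomputable def q : K := RatFunc.X

/- The free ℚ(q)-module with basis indexed by pairs (m, n);
   `S m n` is the basis vector for a two-part partition m ≥ n, and 0 otherwise. -/
noncomputable abbrev V : Type := (ℕ × ℕ) →₀ K

noncomputable def S (m n : ℕ) : V := if n ≤ m then Finsupp.single (m, n) 1 else 0

/-- The Pieri product `S_a · S_b = ∑_{ℓ=0}^{b} S_{a+b-ℓ, ℓ}` (for a ≥ b). -/
noncomputable def P (a b : ℕ) : V := ∑ ℓ ∈ Finset.range (b + 1), S (a + b - ℓ) ℓ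

/-- `B₂⁽⁰⁾` on the basis: `-q^{m+1}(1-q^{n+1}) S_{m+1}·S_{n+1} + q^n(1-q^{m+2}) S_{m+2}·S_n`. -/
noncomputable def B0 : V →ₗ[K] V :=
  Finsupp.lift V K (ℕ × ℕ) fun p =>
    (-q ^ (p.1 + 1) * (1 - q ^ (p.2 + 1))) • P (p.1 + 1) (p.2 + 1)
      + (q ^ p.2 * (1 - q ^ (p.1 + 2))) • P (p.1 + 2) p.2

/-- `B₂⁽¹⁾` on the basis:
`q^{m+n+1}[(1-q^{n+1}) S_{m+1}·S_{n+1} - (1-q^{m+2}) S_{m+2}·S_n]`. -/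
noncomputable def B1 : V →ₗ[K] V :=
  Finsupp.lift V K (ℕ × ℕ) fun p =>
    q ^ (p.1 + p.2 + 1) •
      ((1 - q ^ (p.2 + 1)) • P (p.1 + 1) (p.2 + 1)
        - (1 - q ^ (p.1 + 2)) • P (p.1 + 2) p.2)

/-! ### Auxiliary machinery -/

lemma q_ne_zero : q ≠ 0 := RatFunc.X_ne_zero

lemma B0_S (a b : ℕ) (h : b ≤ a) :
    B0 (S a b) = (-q ^ (a + 1) * (1 - q ^ (b + 1))) • P (a + 1) (b + 1)
      + (q ^ b * (1 - q ^ (a + 2))) • P (a + 2) b := by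
  simp [B0, S, if_pos h, Finsupp.lift_apply, Finsupp.sum_single_index]

lemma B1_S (a b : ℕ) (h : b ≤ a) :
    B1 (S a b) = q ^ (a + b + 1) •
      ((1 - q ^ (b + 1)) • P (a + 1) (b + 1) - (1 - q ^ (a + 2)) • P (a + 2) b) := by
  simp [B1, S, if_pos h, Finsupp.lift_apply, Finsupp.sum_single_index]

/-- The partial "diagonal" sums `T_k = ∑_{i=0}^{k} S_{m+n+4-i,i}`. -/
noncomputable def T (m n k : ℕ) : V := ∑ i ∈ Finset.range (k + 1), S (m + n + 4 - i) i

lemma P_T1 (m n ℓ : ℕ) (h : ℓ ≤ m + n + 3) :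
    P (m + n + 3 - ℓ) (ℓ + 1) = T m n (ℓ + 1) := by
  unfold P T
  exact Finset.sum_congr rfl fun i _ => by congr 1; omega

lemma P_T2 (m n ℓ : ℕ) (h : ℓ ≤ m + n + 4) :
    P (m + n + 4 - ℓ) ℓ = T m n ℓ := by
  unfold P T
  exact Finset.sum_congr rfl fun i _ => by congr 1; omega

lemma B1_ST (m n ℓ : ℕ) (h : ℓ ≤ n + 1) (hmn : n ≤ m) :
    B1 (S (m + n + 2 - ℓ) ℓ) =
      q ^ (m + n + 3) • ((1 - q ^ (ℓ + 1)) • T m n (ℓ + 1)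
        - (1 - q ^ (m + n + 4 - ℓ)) • T m n ℓ) := by
  rw [B1_S _ _ (by omega),
      show m + n + 2 - ℓ + 1 = m + n + 3 - ℓ by omega,
      show m + n + 2 - ℓ + 2 = m + n + 4 - ℓ by omega,
      show m + n + 2 - ℓ + ℓ + 1 = m + n + 3 by omega,
      P_T1 m n ℓ (by omega), P_T2 m n ℓ (by omega)]

lemma B0_ST (m n ℓ : ℕ) (h : ℓ ≤ n + 1) (hmn : n ≤ m) :
    B0 (S (m + n + 2 - ℓ) ℓ) =
      (-q ^ (m + n + 3 - ℓ) * (1 - q ^ (ℓ + 1))) • T m n (ℓ + 1)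
        + (q ^ ℓ * (1 - q ^ (m + n + 4 - ℓ))) • T m n ℓ := by
  rw [B0_S _ _ (by omega),
      show m + n + 2 - ℓ + 1 = m + n + 3 - ℓ by omega,
      show m + n + 2 - ℓ + 2 = m + n + 4 - ℓ by omega,
      P_T1 m n ℓ (by omega), P_T2 m n ℓ (by omega)]

lemma sum_extend (N : ℕ) (f : ℕ → V) :
    ∑ ℓ ∈ Finset.range N, f ℓ
      = ∑ ℓ ∈ Finset.range (N + 1), (if ℓ < N then f ℓ else 0) := by
  rw [Finset.sum_range_succ, if_neg (lt_irrefl N), add_zero]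
  exact Finset.sum_congr rfl fun ℓ hl => (if_pos (Finset.mem_range.mp hl)).symm

lemma telescope (N : ℕ) (x y : ℕ → K) (v : ℕ → V)
    (h0 : y 0 = 0) (htop : x N = 0) (hmid : ∀ k < N, x k + y (k + 1) = 0) :
    ∑ ℓ ∈ Finset.range (N + 1), (x ℓ • v (ℓ + 1) + y ℓ • v ℓ) = 0 := by
  rw [Finset.sum_add_distrib, Finset.sum_range_succ, htop, zero_smul, add_zero,
      Finset.sum_range_succ' (fun ℓ => y ℓ • v ℓ) N, h0, zero_smul, add_zero,
      ← Finset.sum_add_distrib]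
  refine Finset.sum_eq_zero fun k hk => ?_
  rw [← add_smul, hmid k (Finset.mem_range.mp hk), zero_smul]

section generic
variable {F : Type} [Field F] {M : Type} [AddCommGroup M] [Module F M]

lemma combL_pos (c1 c2 E A B X Y : F) (u v : M)
    (hX : c1 * E * A + c2 * E * A = X) (hY : -(c1 * E * B) + -(c2 * E * B) = Y) :
    c1 • (E • (A • u - B • v)) + c2 • (E • (A • u - B • v)) = X • u + Y • v := by
  rw [← hX, ← hY]; module

lemma combL_neg (c1 E A B X Y : F) (u v : M)
    (hX : c1 * E * A = X) (hY : -(c1 * E * B) = Y) :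
    c1 • (E • (A • u - B • v)) = X • u + Y • v := by
  rw [← hX, ← hY]; module

lemma combR_pos (e1 e2 α β a b X Y : F) (u v : M)
    (hX : e1 * e2 * α * a - e1 * e2 * β * a = X)
    (hY : e1 * e2 * α * b - e1 * e2 * β * b = Y) :
    e1 • (e2 • (α • (a • u + b • v) - β • (a • u + b • v))) = X • u + Y • v := by
  rw [← hX, ← hY]; module

lemma combR_neg (e1 e2 α a b X Y : F) (u v : M)
    (hX : e1 * e2 * α * a = X) (hY : e1 * e2 * α * b = Y) :
    e1 • (e2 • (α • (a • u + b • v))) = X • u + Y • v := by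
  rw [← hX, ← hY]; module

lemma comb_sub (a b c d X Y : F) (u v : M)
    (hX : a - c = X) (hY : b - d = Y) :
    (a • u + b • v) - (c • u + d • v) = X • u + Y • v := by
  rw [← hX, ← hY]; module

end generic

/-! ### Coefficient functions -/

noncomputable def xL (m n ℓ : ℕ) : K :=
  -q ^ (m + 1) * (1 - q ^ (n + 1)) * (q ^ (m + n + 3) * (1 - q ^ (ℓ + 1)))
    + (if ℓ < n + 1 then
        q ^ n * (1 - q ^ (m + 2)) * (q ^ (m + n + 3) * (1 - q ^ (ℓ + 1))) else 0)

noncomputable def yL (m n ℓ : ℕ) : K :=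
  q ^ (m + 1) * (1 - q ^ (n + 1)) * (q ^ (m + n + 3) * (1 - q ^ (m + n + 4 - ℓ)))
    + (if ℓ < n + 1 then
        -(q ^ n * (1 - q ^ (m + 2)) * (q ^ (m + n + 3) * (1 - q ^ (m + n + 4 - ℓ)))) else 0)

noncomputable def xR (m n ℓ : ℕ) : K :=
  q ^ (m + n + 2) * (1 - q ^ (n + 1)) * (-q ^ (m + n + 3 - ℓ) * (1 - q ^ (ℓ + 1)))
    + (if ℓ < n + 1 then
        -(q ^ (m + n + 2) * (1 - q ^ (m + 2)) * (-q ^ (m + n + 3 - ℓ) * (1 - q ^ (ℓ + 1))))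
      else 0)

noncomputable def yR (m n ℓ : ℕ) : K :=
  q ^ (m + n + 2) * (1 - q ^ (n + 1)) * (q ^ ℓ * (1 - q ^ (m + n + 4 - ℓ)))
    + (if ℓ < n + 1 then
        -(q ^ (m + n + 2) * (1 - q ^ (m + 2)) * (q ^ ℓ * (1 - q ^ (m + n + 4 - ℓ)))) else 0)

set_option maxHeartbeats 1000000 in
lemma hL (m n : ℕ) (h : n ≤ m) :
    B1 (B0 (S m n)) =
      ∑ ℓ ∈ Finset.range (n + 2), (xL m n ℓ • T m n (ℓ + 1) + yL m n ℓ • T m n ℓ) := by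
  rw [B0_S m n h]
  unfold P
  rw [map_add, map_smul, map_smul, map_sum, map_sum]
  rw [show (∑ ℓ ∈ Finset.range (n + 1 + 1), B1 (S (m + 1 + (n + 1) - ℓ) ℓ))
      = ∑ ℓ ∈ Finset.range (n + 2), (q ^ (m + n + 3) •
          ((1 - q ^ (ℓ + 1)) • T m n (ℓ + 1) - (1 - q ^ (m + n + 4 - ℓ)) • T m n ℓ)) from
    Finset.sum_congr (by norm_num) fun ℓ hℓ => by
      have hl := Finset.mem_range.mp hℓ
      rw [show m + 1 + (n + 1) - ℓ = m + n + 2 - ℓ by omega]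
      exact B1_ST m n ℓ (by omega) h]
  rw [show (∑ ℓ ∈ Finset.range (n + 1), B1 (S (m + 2 + n - ℓ) ℓ))
      = ∑ ℓ ∈ Finset.range (n + 1), (q ^ (m + n + 3) •
          ((1 - q ^ (ℓ + 1)) • T m n (ℓ + 1) - (1 - q ^ (m + n + 4 - ℓ)) • T m n ℓ)) from
    Finset.sum_congr rfl fun ℓ hℓ => by
      have hl := Finset.mem_range.mp hℓ
      rw [show m + 2 + n - ℓ = m + n + 2 - ℓ by omega]
      exact B1_ST m n ℓ (by omega) h]
  rw [sum_extend (n + 1)]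
  rw [Finset.smul_sum, Finset.smul_sum, ← Finset.sum_add_distrib]
  refine Finset.sum_congr rfl fun ℓ _ => ?_
  by_cases hl : ℓ < n + 1
  · simp only [if_pos hl, xL, yL]
    refine combL_pos (F := K) (M := V) _ _ _ _ _ _ _ _ _ ?_ ?_ <;> ring
  · simp only [if_neg hl, xL, yL, smul_zero, add_zero]
    refine combL_neg (F := K) (M := V) _ _ _ _ _ _ _ _ ?_ ?_ <;> ring

set_option maxHeartbeats 1000000 in
lemma hR (m n : ℕ) (h : n ≤ m) :
    q • B0 (B1 (S m n)) =
      ∑ ℓ ∈ Finset.range (n + 2), (xR m n ℓ • T m n (ℓ + 1) + yR m n ℓ • T m n ℓ) := by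
  rw [B1_S m n h]
  unfold P
  rw [map_smul, map_sub, map_smul, map_smul, map_sum, map_sum]
  rw [show (∑ ℓ ∈ Finset.range (n + 1 + 1), B0 (S (m + 1 + (n + 1) - ℓ) ℓ))
      = ∑ ℓ ∈ Finset.range (n + 2),
          ((-q ^ (m + n + 3 - ℓ) * (1 - q ^ (ℓ + 1))) • T m n (ℓ + 1)
            + (q ^ ℓ * (1 - q ^ (m + n + 4 - ℓ))) • T m n ℓ) from
    Finset.sum_congr (by norm_num) fun ℓ hℓ => by
      have hl := Finset.mem_range.mp hℓ
      rw [show m + 1 + (n + 1) - ℓ = m + n + 2 - ℓ by omega]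
      exact B0_ST m n ℓ (by omega) h]
  rw [show (∑ ℓ ∈ Finset.range (n + 1), B0 (S (m + 2 + n - ℓ) ℓ))
      = ∑ ℓ ∈ Finset.range (n + 1),
          ((-q ^ (m + n + 3 - ℓ) * (1 - q ^ (ℓ + 1))) • T m n (ℓ + 1)
            + (q ^ ℓ * (1 - q ^ (m + n + 4 - ℓ))) • T m n ℓ) from
    Finset.sum_congr rfl fun ℓ hℓ => by
      have hl := Finset.mem_range.mp hℓ
      rw [show m + 2 + n - ℓ = m + n + 2 - ℓ by omega]
      exact B0_ST m n ℓ (by omega) h]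
  rw [sum_extend (n + 1)]
  rw [Finset.smul_sum, Finset.smul_sum, ← Finset.sum_sub_distrib,
      Finset.smul_sum, Finset.smul_sum]
  refine Finset.sum_congr rfl fun ℓ _ => ?_
  by_cases hl : ℓ < n + 1
  · simp only [if_pos hl, xR, yR]
    refine combR_pos (F := K) (M := V) _ _ _ _ _ _ _ _ _ _ ?_ ?_ <;> ring
  · simp only [if_neg hl, xR, yR, smul_zero, sub_zero, add_zero]
    refine combR_neg (F := K) (M := V) _ _ _ _ _ _ _ _ _ ?_ ?_ <;> ring

set_option maxHeartbeats 1000000 in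
/-- The q-commutation relation `B₂⁽¹⁾ B₂⁽⁰⁾ = q · B₂⁽⁰⁾ B₂⁽¹⁾` on each basis element. -/
theorem B1_B0_eq_q_smul_B0_B1 (m n : ℕ) (h : n ≤ m) :
    B1 (B0 (S m n)) = q • B0 (B1 (S m n)) := by
  rw [hL m n h, hR m n h, ← sub_eq_zero, ← Finset.sum_sub_distrib]
  rw [Finset.sum_congr rfl
    (fun ℓ _ => comb_sub (F := K) (M := V) (xL m n ℓ) (yL m n ℓ) (xR m n ℓ) (yR m n ℓ)
      (xL m n ℓ - xR m n ℓ) (yL m n ℓ - yR m n ℓ) (T m n (ℓ + 1)) (T m n ℓ) rfl rfl)]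
  have h0 : yL m n 0 - yR m n 0 = 0 := by
    simp only [yL, yR, if_pos (Nat.succ_pos n), Nat.sub_zero, pow_zero]
    ring
  have htop : xL m n (n + 1) - xR m n (n + 1) = 0 := by
    simp only [xL, xR, if_neg (lt_irrefl (n + 1)), add_zero,
      show m + n + 3 - (n + 1) = m + 2 from by omega]
    ring
  have hmid : ∀ k < n + 1,
      (xL m n k - xR m n k) + (yL m n (k + 1) - yR m n (k + 1)) = 0 := by
    intro k hk
    rcases Nat.lt_or_ge k n with hkn | hkn
    · simp only [xL, xR, yL, yR, if_pos (show k < n + 1 by omega),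
        if_pos (show k + 1 < n + 1 by omega),
        show m + n + 4 - (k + 1) = m + n + 3 - k from by omega]
      rw [pow_sub₀ _ q_ne_zero (show k ≤ m + n + 3 by omega)]
      field_simp
      ring
    · have hk' : k = n := by omega
      rw [hk']
      simp only [xL, xR, yL, yR, if_pos (Nat.lt_succ_self n),
        if_neg (lt_irrefl (n + 1)), add_zero,
        show m + n + 3 - n = m + 3 from by omega,
        show m + n + 4 - (n + 1) = m + 3 from by omega]
      ring
  exact telescope (n + 1) _ _ (T m n) h0 htop hmid
end

section
/- With B₂⁽⁰⁾ and B₂⁽¹⁾ defined as above on the span of {S_{m,n}}, for every k ≥ 0 one has (B₂⁽⁰⁾ + B₂⁽¹⁾) S_k = (1 − q^{k+1})(1 − q^{k+2}) S_{k+2}, where S_k := S_{k,0}. -/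
/-- `(B₂⁽⁰⁾ + B₂⁽¹⁾) S_k = (1-q^{k+1})(1-q^{k+2}) S_{k+2}`, where `S_k = S_{k,0}`. -/
theorem B0_add_B1_on_Sk (k : ℕ) :
    (B0 + B1) (S k 0) = ((1 - q ^ (k + 1)) * (1 - q ^ (k + 2))) • S (k + 2) 0 := by
  have hS : S k 0 = Finsupp.single (k, 0) 1 := by simp [S]
  rw [LinearMap.add_apply, hS, B0, B1]
  simp only [Finsupp.lift_apply, Finsupp.sum_single_index, zero_smul, one_smul]
  simp only [P, Finset.sum_range_succ, Finset.sum_range_zero, S]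
  ext p
  simp only [Finsupp.add_apply, Finsupp.sub_apply, Finsupp.smul_apply, Finsupp.zero_apply,
    zero_add, Finsupp.single_apply, smul_eq_mul, Nat.le_add_left, if_true, Nat.zero_le,
    Nat.add_sub_cancel]
  norm_num
  split_ifs <;> ring
end

section
/- Let Σ_i act on pairs of words by Σ_i(w₁, w₂) = (σ̄_i σ_{i+1} w₁, σ_i σ̄_{i+1} w₂), where σ_j and σ̄_j are the Lascoux–Schützenberger crystal-type operators on the letters j, j+1 restricted to evaluations in {(1,2),(2,1)}. Define the six word pairs C₁(a)=(aabb, baab), C₂(a)=(abab, abab), C₃(a)=(abba, aabb), C₄(a)=(baab, bbaa), C₅(a)=(baba, baba), C₆(a)=(bbaa, abba) where b=a+1, and the insertion operator I_k^{(x)} that inserts letter x at position k of a word (acting diagonally on pairs). Then for any i > 1, any 1 ≤ j ≤ 6, and any 1 ≤ k ≤ 5, there exist 1 ≤ j' ≤ 6 and 1 ≤ k' ≤ 5 such that Σ_i(I_k^{(i+2)} C_j(i)) = I_{k'}^{(i)} C_{j'}(i+1). -/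
/-- `σ_a` on three-letter words over `{a, b = a+1}`:
`aab ↔ abb`, `aba ↔ bba`, `baa ↔ bab`. -/
def sigma3 (a : ℕ) (w : List ℕ) : List ℕ :=
  let b := a + 1
  if w = [a, a, b] then [a, b, b] else if w = [a, b, b] then [a, a, b]
  else if w = [a, b, a] then [b, b, a] else if w = [b, b, a] then [a, b, a]
  else if w = [b, a, a] then [b, a, b] else if w = [b, a, b] then [b, a, a]
  else w

/-- `σ̄_a` on three-letter words: `aab ↔ bab`, `aba ↔ abb`, `baa ↔ bba`. -/
def sigmaBar3 (a : ℕ) (w : List ℕ) : List ℕ :=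
  let b := a + 1
  if w = [a, a, b] then [b, a, b] else if w = [b, a, b] then [a, a, b]
  else if w = [a, b, a] then [a, b, b] else if w = [a, b, b] then [a, b, a]
  else if w = [b, a, a] then [b, b, a] else if w = [b, b, a] then [b, a, a]
  else w

def isAB (a x : ℕ) : Bool := x == a || x == a + 1

/-- The restriction `w_{{a, a+1}}`: the subword of letters `a` and `a+1`. -/
def restrict (a : ℕ) (w : List ℕ) : List ℕ := w.filter (isAB a)

/-- Replace, in order, the letters of `w` lying in `{a, a+1}` by the letters of `s`. -/
def substitute (a : ℕ) : List ℕ → List ℕ → List ℕ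
  | [], _ => []
  | x :: xs, s =>
    if isAB a x then
      match s with
      | [] => x :: substitute a xs []
      | y :: ys => y :: substitute a xs ys
    else x :: substitute a xs s

/-- `σ_a` on an arbitrary word: apply the 3-letter rule to the subword of
letters `a, a+1`, leaving all other letters in place. -/
def sigmaW (a : ℕ) (w : List ℕ) : List ℕ := substitute a w (sigma3 a (restrict a w))

/-- `σ̄_a` on an arbitrary word. -/
def sigmaBarW (a : ℕ) (w : List ℕ) : List ℕ := substitute a w (sigmaBar3 a (restrict a w))

/-- `Σ_i(w₁, w₂) = (σ̄_i σ_{i+1} w₁, σ_i σ̄_{i+1} w₂)`. -/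
def Sig (i : ℕ) (p : List ℕ × List ℕ) : List ℕ × List ℕ :=
  (sigmaBarW i (sigmaW (i + 1) p.1), sigmaW i (sigmaBarW (i + 1) p.2))

/-- The six word pairs `C₁(a), …, C₆(a)` with `b = a+1`. -/
def Cpair (j a : ℕ) : List ℕ × List ℕ :=
  let b := a + 1
  match j with
  | 1 => ([a, a, b, b], [b, a, a, b])
  | 2 => ([a, b, a, b], [a, b, a, b])
  | 3 => ([a, b, b, a], [a, a, b, b])
  | 4 => ([b, a, a, b], [b, b, a, a])
  | 5 => ([b, a, b, a], [b, a, b, a])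
  | 6 => ([b, b, a, a], [a, b, b, a])
  | _ => ([], [])

/-- `I_k^{(x)}` inserts the letter `x` before position `k` (1-indexed),
acting diagonally on pairs. -/
def Ins (k x : ℕ) (p : List ℕ × List ℕ) : List ℕ × List ℕ :=
  (p.1.insertIdx (k - 1) x, p.2.insertIdx (k - 1) x)


namespace SigmaInsertAux

/-- Shift every letter of a word by `d`. -/
def sh (d : ℕ) (w : List ℕ) : List ℕ := w.map (· + d)

lemma sh_inj {d : ℕ} {w v : List ℕ} : sh d w = sh d v ↔ w = v := by
  constructor
  · intro h
    exact List.map_injective_iff.2 (fun x y hxy => by omega) h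
  · rintro rfl; rfl

lemma isAB_shift (a d x : ℕ) : isAB (a + d) (x + d) = isAB a x := by
  have h1 : (x + d == a + d) = (x == a) := by
    rcases Bool.eq_false_or_eq_true (x == a) with h | h
    · rw [h]; simp only [beq_iff_eq, beq_eq_false_iff_ne] at h ⊢; omega
    · rw [h]; simp only [beq_iff_eq, beq_eq_false_iff_ne] at h ⊢; omega
  have h2 : (x + d == a + d + 1) = (x == a + 1) := by
    rcases Bool.eq_false_or_eq_true (x == a + 1) with h | h
    · rw [h]; simp only [beq_iff_eq, beq_eq_false_iff_ne] at h ⊢; omega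
    · rw [h]; simp only [beq_iff_eq, beq_eq_false_iff_ne] at h ⊢; omega
  simp only [isAB, h1, h2]

lemma restrict_shift (a d : ℕ) (w : List ℕ) :
    restrict (a + d) (sh d w) = sh d (restrict a w) := by
  induction w with
  | nil => rfl
  | cons x xs ih =>
    simp only [sh, restrict, List.map_cons, List.filter_cons, isAB_shift] at *
    by_cases h : isAB a x = true <;> simp [h, ih]

lemma sigma3_shift (a d : ℕ) (w : List ℕ) :
    sigma3 (a + d) (sh d w) = sh d (sigma3 a w) := by
  have p1 : (sh d w = [a + d, a + d, a + d + 1]) ↔ w = [a, a, a + 1] := by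
    rw [show [a + d, a + d, a + d + 1] = sh d [a, a, a + 1] from by simp [sh] <;> omega, sh_inj]
  have p2 : (sh d w = [a + d, a + d + 1, a + d + 1]) ↔ w = [a, a + 1, a + 1] := by
    rw [show [a + d, a + d + 1, a + d + 1] = sh d [a, a + 1, a + 1] from by simp [sh] <;> omega, sh_inj]
  have p3 : (sh d w = [a + d, a + d + 1, a + d]) ↔ w = [a, a + 1, a] := by
    rw [show [a + d, a + d + 1, a + d] = sh d [a, a + 1, a] from by simp [sh] <;> omega, sh_inj]
  have p4 : (sh d w = [a + d + 1, a + d + 1, a + d]) ↔ w = [a + 1, a + 1, a] := by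
    rw [show [a + d + 1, a + d + 1, a + d] = sh d [a + 1, a + 1, a] from by simp [sh] <;> omega, sh_inj]
  have p5 : (sh d w = [a + d + 1, a + d, a + d]) ↔ w = [a + 1, a, a] := by
    rw [show [a + d + 1, a + d, a + d] = sh d [a + 1, a, a] from by simp [sh] <;> omega, sh_inj]
  have p6 : (sh d w = [a + d + 1, a + d, a + d + 1]) ↔ w = [a + 1, a, a + 1] := by
    rw [show [a + d + 1, a + d, a + d + 1] = sh d [a + 1, a, a + 1] from by simp [sh] <;> omega, sh_inj]
  simp only [sigma3, p1, p2, p3, p4, p5, p6]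
  split_ifs <;> first
    | rfl
    | (simp [sh] <;> omega)

lemma sigmaBar3_shift (a d : ℕ) (w : List ℕ) :
    sigmaBar3 (a + d) (sh d w) = sh d (sigmaBar3 a w) := by
  have p1 : (sh d w = [a + d, a + d, a + d + 1]) ↔ w = [a, a, a + 1] := by
    rw [show [a + d, a + d, a + d + 1] = sh d [a, a, a + 1] from by simp [sh] <;> omega, sh_inj]
  have p2 : (sh d w = [a + d, a + d + 1, a + d + 1]) ↔ w = [a, a + 1, a + 1] := by
    rw [show [a + d, a + d + 1, a + d + 1] = sh d [a, a + 1, a + 1] from by simp [sh] <;> omega, sh_inj]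
  have p3 : (sh d w = [a + d, a + d + 1, a + d]) ↔ w = [a, a + 1, a] := by
    rw [show [a + d, a + d + 1, a + d] = sh d [a, a + 1, a] from by simp [sh] <;> omega, sh_inj]
  have p4 : (sh d w = [a + d + 1, a + d + 1, a + d]) ↔ w = [a + 1, a + 1, a] := by
    rw [show [a + d + 1, a + d + 1, a + d] = sh d [a + 1, a + 1, a] from by simp [sh] <;> omega, sh_inj]
  have p5 : (sh d w = [a + d + 1, a + d, a + d]) ↔ w = [a + 1, a, a] := by
    rw [show [a + d + 1, a + d, a + d] = sh d [a + 1, a, a] from by simp [sh] <;> omega, sh_inj]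
  have p6 : (sh d w = [a + d + 1, a + d, a + d + 1]) ↔ w = [a + 1, a, a + 1] := by
    rw [show [a + d + 1, a + d, a + d + 1] = sh d [a + 1, a, a + 1] from by simp [sh] <;> omega, sh_inj]
  simp only [sigmaBar3, p1, p2, p3, p4, p5, p6]
  split_ifs <;> first
    | rfl
    | (simp [sh] <;> omega)

lemma substitute_shift (a d : ℕ) (w s : List ℕ) :
    substitute (a + d) (sh d w) (sh d s) = sh d (substitute a w s) := by
  induction w generalizing s with
  | nil => rfl
  | cons x xs ih =>
    simp only [sh, List.map_cons, substitute, isAB_shift]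
    by_cases h : isAB a x = true
    · cases s with
      | nil => simpa [substitute, h, sh] using ih []
      | cons y ys => simpa [substitute, h, sh] using ih ys
    · simpa [substitute, h, sh] using ih s

lemma sigmaW_shift (a d : ℕ) (w : List ℕ) :
    sigmaW (a + d) (sh d w) = sh d (sigmaW a w) := by
  rw [sigmaW, sigmaW, restrict_shift, sigma3_shift, substitute_shift]

lemma sigmaBarW_shift (a d : ℕ) (w : List ℕ) :
    sigmaBarW (a + d) (sh d w) = sh d (sigmaBarW a w) := by
  rw [sigmaBarW, sigmaBarW, restrict_shift, sigmaBar3_shift, substitute_shift]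

/-- Shift on pairs. -/
def shP (d : ℕ) (p : List ℕ × List ℕ) : List ℕ × List ℕ := (sh d p.1, sh d p.2)

lemma Sig_shift (d : ℕ) (p : List ℕ × List ℕ) :
    Sig (2 + d) (shP d p) = shP d (Sig 2 p) := by
  simp only [Sig, shP]
  rw [show 2 + d + 1 = 3 + d by omega, show (3 : ℕ) = 2 + 1 by rfl]
  rw [sigmaW_shift, sigmaBarW_shift, sigmaBarW_shift, sigmaW_shift]

lemma insertIdx_map (d n x : ℕ) (l : List ℕ) :
    (sh d l).insertIdx n (x + d) = sh d (l.insertIdx n x) := by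
  induction n generalizing l with
  | zero => rfl
  | succ m ih =>
    cases l with
    | nil => rfl
    | cons y ys => simp only [sh, List.map_cons, List.insertIdx_succ_cons] at *; rw [ih]

lemma Ins_shift (k x d : ℕ) (p : List ℕ × List ℕ) :
    Ins k (x + d) (shP d p) = shP d (Ins k x p) := by
  simp only [Ins, shP, insertIdx_map]

lemma Cpair_shift (j a d : ℕ) (hj : j ≤ 6) : Cpair j (a + d) = shP d (Cpair j a) := by
  interval_cases j <;> simp [Cpair, shP, sh] <;> omega

lemma key (j k : ℕ) (hj1 : 1 ≤ j) (hj2 : j ≤ 6) (hk1 : 1 ≤ k) (hk2 : k ≤ 5) :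
    ∃ j' k', 1 ≤ j' ∧ j' ≤ 6 ∧ 1 ≤ k' ∧ k' ≤ 5 ∧
      Sig 2 (Ins k 4 (Cpair j 2)) = Ins k' 2 (Cpair j' 3) := by
  interval_cases j <;> interval_cases k
  · exact ⟨4, 3, by decide⟩
  · exact ⟨2, 3, by decide⟩
  · exact ⟨2, 2, by decide⟩
  · exact ⟨3, 2, by decide⟩
  · exact ⟨1, 2, by decide⟩
  · exact ⟨4, 2, by decide⟩
  · exact ⟨4, 1, by decide⟩
  · exact ⟨3, 4, by decide⟩
  · exact ⟨3, 3, by decide⟩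
  · exact ⟨1, 1, by decide⟩
  · exact ⟨5, 2, by decide⟩
  · exact ⟨5, 1, by decide⟩
  · exact ⟨6, 1, by decide⟩
  · exact ⟨3, 1, by decide⟩
  · exact ⟨2, 1, by decide⟩
  · exact ⟨4, 4, by decide⟩
  · exact ⟨6, 4, by decide⟩
  · exact ⟨5, 4, by decide⟩
  · exact ⟨5, 3, by decide⟩
  · exact ⟨1, 3, by decide⟩
  · exact ⟨4, 5, by decide⟩
  · exact ⟨6, 3, by decide⟩
  · exact ⟨6, 2, by decide⟩
  · exact ⟨1, 5, by decide⟩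
  · exact ⟨1, 4, by decide⟩
  · exact ⟨5, 5, by decide⟩
  · exact ⟨6, 5, by decide⟩
  · exact ⟨3, 5, by decide⟩
  · exact ⟨2, 5, by decide⟩
  · exact ⟨2, 4, by decide⟩

end SigmaInsertAux

/-- Lemma 17 of the paper: for `i > 1`, `1 ≤ j ≤ 6`, `1 ≤ k ≤ 5`, there exist
`1 ≤ j' ≤ 6` and `1 ≤ k' ≤ 5` with `Σ_i(I_k^{(i+2)} C_j(i)) = I_{k'}^{(i)} C_{j'}(i+1)`. -/

theorem Sigma_insert_C (i j k : ℕ) (hi : 1 < i) (hj1 : 1 ≤ j) (hj2 : j ≤ 6)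
    (hk1 : 1 ≤ k) (hk2 : k ≤ 5) :
    ∃ j' k', 1 ≤ j' ∧ j' ≤ 6 ∧ 1 ≤ k' ∧ k' ≤ 5 ∧
      Sig i (Ins k (i + 2) (Cpair j i)) = Ins k' i (Cpair j' (i + 1)) := by
  obtain ⟨d, rfl⟩ : ∃ d, i = 2 + d := ⟨i - 2, by omega⟩
  obtain ⟨j', k', h1, h2, h3, h4, heq⟩ := SigmaInsertAux.key j k hj1 hj2 hk1 hk2
  refine ⟨j', k', h1, h2, h3, h4, ?_⟩
  rw [show 2 + d + 2 = 4 + d from by omega,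
      show 2 + d + 1 = 3 + d from by omega,
      SigmaInsertAux.Cpair_shift j 2 d hj2,
      SigmaInsertAux.Cpair_shift j' 3 d h2,
      show (2 : ℕ) + d = 2 + d from rfl,
      SigmaInsertAux.Ins_shift, SigmaInsertAux.Ins_shift,
      SigmaInsertAux.Sig_shift, heq]
end
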